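/- Let M be a topological space with basepoint x₀, let U ⊆ M be a subset containing x₀, and let R_U : [0,1] × U → U be a continuous map with R_U(0,x) = x and R_U(1,x) = x₀ for all x ∈ U, and R_U(t,x₀) = x₀ for all t ∈ [0,1]. Let e⁻¹(U) := {γ ∈ ΩM : γ(1/2) ∈ U}. Then the map R : e⁻¹(U) → 𝓕 defined by R(γ)(t) = γ(2t) for t ∈ [0,1/4], R(γ)(t) = R_U(4t−1, γ(1/2)) for t ∈ [1/4,1/2], R(γ)(t) = R_U(3−4t, γ(1/2)) for t ∈ [1/2,3/4], and R(γ)(t) = γ(2t−1) for t ∈ [3/4,1], is a well-defined continuous map and is a homotopy inverse to the inclusion 𝓕 ↪ e⁻¹(U). -/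

import Mathlib

open Set

/-- The based loop space of `M` at `x₀`: continuous maps `[0,1] → M` sending both
endpoints to `x₀`, with the compact-open topology. -/
abbrev OmegaLoop (M : Type*) [TopologicalSpace M] (x₀ : M) : Type _ :=
  {γ : C(unitInterval, M) // γ 0 = x₀ ∧ γ 1 = x₀}

/-- The midpoint `1/2` of the unit interval. -/
noncomputable def half : unitInterval := ⟨1/2, by norm_num⟩

/-- The figure-eight space `𝓕 = {γ ∈ ΩM : γ(1/2) = x₀}`. -/
abbrev FigureEight (M : Type*) [TopologicalSpace M] (x₀ : M) : Type _ :=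
  {γ : OmegaLoop M x₀ // γ.1 half = x₀}

/-- The subspace `e⁻¹(U) = {γ ∈ ΩM : γ(1/2) ∈ U}`. -/
abbrev EvalPreimage (M : Type*) [TopologicalSpace M] (x₀ : M) (U : Set M) : Type _ :=
  {γ : OmegaLoop M x₀ // γ.1 half ∈ U}

/-- The inclusion `𝓕 ↪ e⁻¹(U)`, given `x₀ ∈ U`. -/
def figureEightInclusion (M : Type*) [TopologicalSpace M] (x₀ : M) (U : Set M)
    (hU : x₀ ∈ U) : C(FigureEight M x₀, EvalPreimage M x₀ U) :=
  ⟨fun γ => ⟨γ.1, by rw [γ.2]; exact hU⟩,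
    Continuous.subtype_mk continuous_subtype_val fun γ => by rw [γ.2]; exact hU⟩

/-!
The homotopy from the identity of `e⁻¹(U)` to `R` is `spliceLoop`: at time `s` it runs
`γ|[0,1/2]` on `[0, (2 - s)/4]`, then the track `u ↦ R_U(u, γ(1/2))` from `u = 0` to `u = s` and
back on the window `|4t - 2| ≤ s`, then `γ|[1/2,1]` on `[(2 + s)/4, 1]`. The pieces agree on the
edge of the window because `R_U(0, ·) = id`. At `s = 0` it is `γ`, at `s = 1` it is `R γ`, and its
value at `1/2` is `R_U(s, γ(1/2)) ∈ U`, which is `x₀` when `γ(1/2) = x₀`; so on `𝓕` the same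
formula is a homotopy from the identity to `R ∘ i`.
-/

open scoped unitInterval

/-- Collapses the window `|4t - 2| ≤ s` onto `1/2` and maps `[0, (2 - s)/4]` and
`[(2 + s)/4, 1]` affinely onto `[0, 1/2]` and `[1/2, 1]`. -/
noncomputable def squeezeTime (s t : ℝ) : ℝ :=
  1 / 2 + (2 * t - 1 - max (-(s / 2)) (min (s / 2) (2 * t - 1))) / (2 - s)

lemma continuous_squeezeTime : Continuous fun p : I × I => squeezeTime p.1 p.2 := by
  refine continuous_const.add (Continuous.div (by fun_prop) (by fun_prop) fun p => ?_)
  linarith [p.1.2.2]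

lemma squeezeTime_of_abs_le {s t : ℝ} (h : |4 * t - 2| ≤ s) : squeezeTime s t = 1 / 2 := by
  obtain ⟨h₁, h₂⟩ := abs_le.mp h
  rw [squeezeTime, min_eq_right (by linarith), max_eq_right (by linarith)]
  simp

lemma squeezeTime_of_le {s t : ℝ} (hs₀ : 0 ≤ s) (hs : s < 2) (ht : 4 * t ≤ 2 - s) :
    squeezeTime s t = 2 * t / (2 - s) := by
  rw [squeezeTime, min_eq_right (by linarith), max_eq_left (by linarith)]
  field_simp [(by linarith : (2 : ℝ) - s ≠ 0)]
  ring

lemma squeezeTime_of_ge {s t : ℝ} (hs₀ : 0 ≤ s) (hs : s < 2) (ht : 2 + s ≤ 4 * t) :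
    squeezeTime s t = (2 * t - s) / (2 - s) := by
  rw [squeezeTime, min_eq_left (by linarith), max_eq_right (by linarith)]
  field_simp [(by linarith : (2 : ℝ) - s ≠ 0)]
  ring

lemma squeezeTime_zero_left (t : ℝ) : squeezeTime 0 t = t := by
  rcases le_total (4 * t) 2 with h | h
  · rw [squeezeTime_of_le le_rfl two_pos (by linarith)]; ring
  · rw [squeezeTime_of_ge le_rfl two_pos (by linarith)]; ring

lemma squeezeTime_zero_right {s : ℝ} (hs₀ : 0 ≤ s) (hs : s < 2) : squeezeTime s 0 = 0 := by
  rw [squeezeTime_of_le hs₀ hs (by linarith)]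
  simp

lemma squeezeTime_one_right {s : ℝ} (hs₀ : 0 ≤ s) (hs : s < 2) : squeezeTime s 1 = 1 := by
  rw [squeezeTime_of_ge hs₀ hs (by linarith), mul_one]
  exact div_self (sub_pos.mpr hs).ne'

lemma unitInterval.projIcc_zero : projIcc (0 : ℝ) 1 zero_le_one 0 = 0 := projIcc_left _

lemma unitInterval.projIcc_half : projIcc (0 : ℝ) 1 zero_le_one (1 / 2) = half :=
  projIcc_of_mem _ _

section Splice

variable {M : Type*} [TopologicalSpace M] {x₀ : M} {U : Set M} (RU : C(I × U, U))

noncomputable def spliceLoop (s : I) (γ : EvalPreimage M x₀ U) (t : I) : M :=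
  if |4 * (t : ℝ) - 2| ≤ s then
    RU (projIcc 0 1 zero_le_one (s - |4 * (t : ℝ) - 2|), ⟨γ.1.1 half, γ.2⟩)
  else γ.1.1 (projIcc 0 1 zero_le_one (squeezeTime s t))

variable {RU}

lemma spliceLoop_of_abs_le {s : I} (γ : EvalPreimage M x₀ U) {t : I}
    (h : |4 * (t : ℝ) - 2| ≤ s) :
    spliceLoop RU s γ t =
      RU (projIcc 0 1 zero_le_one (s - |4 * (t : ℝ) - 2|), ⟨γ.1.1 half, γ.2⟩) :=
  if_pos h

lemma spliceLoop_apply_half (s : I) (γ : EvalPreimage M x₀ U) :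
    spliceLoop RU s γ half = RU (s, ⟨γ.1.1 half, γ.2⟩) := by
  have h : |4 * ((half : I) : ℝ) - 2| = 0 := by norm_num [half]
  rw [spliceLoop_of_abs_le γ (h.trans_le s.2.1), h, sub_zero, projIcc_val]

lemma spliceLoop_one_of_mem_Icc_quarter_half (γ : EvalPreimage M x₀ U) {t : I}
    (ht₁ : 1 / 4 ≤ (t : ℝ)) (ht₂ : (t : ℝ) ≤ 1 / 2) :
    spliceLoop RU 1 γ t =
      RU (projIcc 0 1 zero_le_one (4 * (t : ℝ) - 1), ⟨γ.1.1 half, γ.2⟩) := by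
  have h : |4 * (t : ℝ) - 2| = 2 - 4 * t := by rw [abs_of_nonpos (by linarith)]; ring
  rw [spliceLoop_of_abs_le γ (by rw [h, Icc.coe_one]; linarith), h, Icc.coe_one]
  ring_nf

lemma spliceLoop_one_of_mem_Icc_half_threeQuarters (γ : EvalPreimage M x₀ U) {t : I}
    (ht₁ : 1 / 2 ≤ (t : ℝ)) (ht₂ : (t : ℝ) ≤ 3 / 4) :
    spliceLoop RU 1 γ t =
      RU (projIcc 0 1 zero_le_one (3 - 4 * (t : ℝ)), ⟨γ.1.1 half, γ.2⟩) := by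
  have h : |4 * (t : ℝ) - 2| = 4 * t - 2 := abs_of_nonneg (by linarith)
  rw [spliceLoop_of_abs_le γ (by rw [h, Icc.coe_one]; linarith), h, Icc.coe_one]
  ring_nf

variable (hRU0 : ∀ x : U, RU (0, x) = x)
include hRU0

lemma spliceLoop_branches_agree {s : I} (γ : EvalPreimage M x₀ U) {t : I}
    (h : |4 * (t : ℝ) - 2| = s) :
    (RU (projIcc 0 1 zero_le_one (s - |4 * (t : ℝ) - 2|), ⟨γ.1.1 half, γ.2⟩) : M) =
      γ.1.1 (projIcc 0 1 zero_le_one (squeezeTime s t)) := by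
  rw [h, sub_self, unitInterval.projIcc_zero, hRU0, squeezeTime_of_abs_le h.le,
    unitInterval.projIcc_half]

lemma spliceLoop_of_le_abs {s : I} (γ : EvalPreimage M x₀ U) {t : I}
    (h : (s : ℝ) ≤ |4 * (t : ℝ) - 2|) :
    spliceLoop RU s γ t = γ.1.1 (projIcc 0 1 zero_le_one (squeezeTime s t)) := by
  rcases h.eq_or_lt with h | h
  · exact (if_pos h.ge).trans (spliceLoop_branches_agree hRU0 γ h.symm)
  · exact if_neg h.not_ge

lemma continuous_spliceLoop :
    Continuous fun p : (I × EvalPreimage M x₀ U) × I => spliceLoop RU p.1.1 p.1.2 p.2 := by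
  have hs : Continuous fun p : (I × EvalPreimage M x₀ U) × I => (p.1.1 : ℝ) := by fun_prop
  have ht : Continuous fun p : (I × EvalPreimage M x₀ U) × I => |4 * (p.2 : ℝ) - 2| := by
    fun_prop
  have hγ : Continuous fun p : (I × EvalPreimage M x₀ U) × I => p.1.2.1.1 := by fun_prop
  have hmid : Continuous fun p : (I × EvalPreimage M x₀ U) × I =>
      (⟨p.1.2.1.1 half, p.1.2.2⟩ : U) :=
    ((continuous_eval_const half).comp hγ).subtype_mk _
  have hpr : Continuous (projIcc (0 : ℝ) 1 zero_le_one) := continuous_projIcc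
  refine Continuous.if_le ?_ ?_ ht hs fun p h => spliceLoop_branches_agree hRU0 p.1.2 h
  · exact continuous_subtype_val.comp
      (RU.continuous.comp ((hpr.comp (hs.sub ht)).prodMk hmid))
  · exact continuous_eval.comp (hγ.prodMk (hpr.comp
      (continuous_squeezeTime.comp (continuous_fst.fst.prodMk continuous_snd))))

lemma spliceLoop_apply_zero (s : I) (γ : EvalPreimage M x₀ U) : spliceLoop RU s γ 0 = x₀ := by
  rw [spliceLoop_of_le_abs hRU0 γ (by norm_num; linarith [s.2.2]), Icc.coe_zero,
    squeezeTime_zero_right s.2.1 (by linarith [s.2.2]), unitInterval.projIcc_zero]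
  exact γ.1.2.1

lemma spliceLoop_apply_one (s : I) (γ : EvalPreimage M x₀ U) : spliceLoop RU s γ 1 = x₀ := by
  rw [spliceLoop_of_le_abs hRU0 γ (by norm_num; linarith [s.2.2]), Icc.coe_one,
    squeezeTime_one_right s.2.1 (by linarith [s.2.2]), projIcc_right]
  exact γ.1.2.2

lemma spliceLoop_zero (γ : EvalPreimage M x₀ U) (t : I) : spliceLoop RU 0 γ t = γ.1.1 t := by
  rw [spliceLoop_of_le_abs hRU0 γ (abs_nonneg _), Icc.coe_zero, squeezeTime_zero_left,
    projIcc_val]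

lemma spliceLoop_one_of_le_quarter (γ : EvalPreimage M x₀ U) {t : I}
    (ht : (t : ℝ) ≤ 1 / 4) :
    spliceLoop RU 1 γ t = γ.1.1 (projIcc 0 1 zero_le_one (2 * (t : ℝ))) := by
  have h : |4 * (t : ℝ) - 2| = 2 - 4 * t := by rw [abs_of_nonpos (by linarith)]; ring
  rw [spliceLoop_of_le_abs hRU0 γ (by rw [h, Icc.coe_one]; linarith), Icc.coe_one,
    squeezeTime_of_le zero_le_one one_lt_two (by linarith)]
  norm_num

lemma spliceLoop_one_of_threeQuarters_le (γ : EvalPreimage M x₀ U) {t : I}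
    (ht : 3 / 4 ≤ (t : ℝ)) :
    spliceLoop RU 1 γ t = γ.1.1 (projIcc 0 1 zero_le_one (2 * (t : ℝ) - 1)) := by
  have h : |4 * (t : ℝ) - 2| = 4 * t - 2 := abs_of_nonneg (by linarith)
  rw [spliceLoop_of_le_abs hRU0 γ (by rw [h, Icc.coe_one]; linarith), Icc.coe_one,
    squeezeTime_of_ge zero_le_one one_lt_two (by linarith)]
  norm_num

end Splice

section Retraction

variable {M : Type*} [TopologicalSpace M] {x₀ : M} {U : Set M} {RU : C(I × U, U)}
  (hRU0 : ∀ x : U, RU (0, x) = x)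

noncomputable def spliceHomotopy : C(I × EvalPreimage M x₀ U, EvalPreimage M x₀ U) where
  toFun p := ⟨⟨ContinuousMap.curry ⟨_, continuous_spliceLoop hRU0⟩ p,
      spliceLoop_apply_zero hRU0 p.1 p.2, spliceLoop_apply_one hRU0 p.1 p.2⟩,
    show spliceLoop RU p.1 p.2 half ∈ U by rw [spliceLoop_apply_half]; exact Subtype.prop _⟩
  continuous_toFun :=
    ((ContinuousMap.curry ⟨_, continuous_spliceLoop hRU0⟩).continuous.subtype_mk _).subtype_mk _

variable (hRU1 : ∀ x : U, (RU (1, x) : M) = x₀)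

noncomputable def figureEightRetraction : C(EvalPreimage M x₀ U, FigureEight M x₀) where
  toFun γ := ⟨(spliceHomotopy hRU0 (1, γ)).1, (spliceLoop_apply_half 1 γ).trans (hRU1 _)⟩
  continuous_toFun := (continuous_subtype_val.comp
    ((spliceHomotopy hRU0).continuous.comp (Continuous.prodMk_right 1))).subtype_mk _

lemma figureEightInclusion_comp_retraction_homotopic (hU : x₀ ∈ U) :
    ((figureEightInclusion M x₀ U hU).comp (figureEightRetraction hRU0 hRU1)).Homotopic
      (ContinuousMap.id _) :=
  ⟨ContinuousMap.Homotopy.symm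
    { toContinuousMap := spliceHomotopy hRU0
      map_zero_left := fun γ => Subtype.ext <| Subtype.ext <| ContinuousMap.ext <|
        spliceLoop_zero hRU0 γ
      map_one_left := fun _ => rfl }⟩

variable (hU : x₀ ∈ U) (hRUfix : ∀ t : I, (RU (t, ⟨x₀, hU⟩) : M) = x₀)
include hRUfix

lemma spliceLoop_figureEightInclusion_apply_half (s : I) (γ : FigureEight M x₀) :
    spliceLoop RU s (figureEightInclusion M x₀ U hU γ) half = x₀ := by
  rw [spliceLoop_apply_half]
  convert hRUfix s using 4
  exact Subtype.ext γ.2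

noncomputable def spliceHomotopyFigureEight : C(I × FigureEight M x₀, FigureEight M x₀) where
  toFun p := ⟨(spliceHomotopy hRU0 (p.1, figureEightInclusion M x₀ U hU p.2)).1,
    spliceLoop_figureEightInclusion_apply_half hU hRUfix p.1 p.2⟩
  continuous_toFun := (continuous_subtype_val.comp ((spliceHomotopy hRU0).continuous.comp
    (continuous_fst.prodMk ((figureEightInclusion M x₀ U hU).continuous.comp
      continuous_snd)))).subtype_mk _

lemma figureEightRetraction_comp_inclusion_homotopic :
    ((figureEightRetraction hRU0 hRU1).comp (figureEightInclusion M x₀ U hU)).Homotopic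
      (ContinuousMap.id _) :=
  ⟨ContinuousMap.Homotopy.symm
    { toContinuousMap := spliceHomotopyFigureEight hRU0 hU hRUfix
      map_zero_left := fun γ => Subtype.ext <| Subtype.ext <| ContinuousMap.ext <|
        spliceLoop_zero hRU0 (figureEightInclusion M x₀ U hU γ)
      map_one_left := fun _ => rfl }⟩

end Retraction

theorem retraction_homotopy_inverse
    {M : Type*} [TopologicalSpace M] (x₀ : M) (U : Set M) (hU : x₀ ∈ U)
    (RU : C(unitInterval × U, U))
    (hRU0 : ∀ x : U, RU (0, x) = x)
    (hRU1 : ∀ x : U, (RU (1, x) : M) = x₀)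
    (hRUfix : ∀ t : unitInterval, (RU (t, ⟨x₀, hU⟩) : M) = x₀) :
    ∃ R : C(EvalPreimage M x₀ U, FigureEight M x₀),
      (∀ (γ : EvalPreimage M x₀ U) (t : unitInterval),
        ((t : ℝ) ≤ 1/4 → (R γ).1.1 t = γ.1.1 (projIcc 0 1 zero_le_one (2 * (t : ℝ)))) ∧
        (1/4 ≤ (t : ℝ) → (t : ℝ) ≤ 1/2 →
          (R γ).1.1 t =
            (RU (projIcc 0 1 zero_le_one (4 * (t : ℝ) - 1), ⟨γ.1.1 half, γ.2⟩) : M)) ∧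
        (1/2 ≤ (t : ℝ) → (t : ℝ) ≤ 3/4 →
          (R γ).1.1 t =
            (RU (projIcc 0 1 zero_le_one (3 - 4 * (t : ℝ)), ⟨γ.1.1 half, γ.2⟩) : M)) ∧
        (3/4 ≤ (t : ℝ) →
          (R γ).1.1 t = γ.1.1 (projIcc 0 1 zero_le_one (2 * (t : ℝ) - 1)))) ∧
      ((figureEightInclusion M x₀ U hU).comp R).Homotopic (ContinuousMap.id _) ∧
      (R.comp (figureEightInclusion M x₀ U hU)).Homotopic (ContinuousMap.id _) :=
  ⟨figureEightRetraction hRU0 hRU1,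
    fun γ _ => ⟨spliceLoop_one_of_le_quarter hRU0 γ,
      spliceLoop_one_of_mem_Icc_quarter_half γ,
      spliceLoop_one_of_mem_Icc_half_threeQuarters γ,
      spliceLoop_one_of_threeQuarters_le hRU0 γ⟩,
    figureEightInclusion_comp_retraction_homotopic hRU0 hRU1 hU,
    figureEightRetraction_comp_inclusion_homotopic hRU0 hRU1 hU hRUfix⟩
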